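/- arXiv:math/0603081 — 2 statements merged into one kernel-verified Lean document; each statement's English description precedes it below -/
import Mathlib

section
/- Every element of the module H is of the form f · v_0 where f lies in the unital subalgebra of Pol(Mat_n)_q generated by the elements z_a^α (a,α=1,…,n); i.e. the linear map f ↦ f·v_0 from this subalgebra (isomorphic to ℂ[Mat_n]_q) onto H is surjective. -/
noncomputable section
open scoped BigOperators

/-- Generators of the algebra `ℂ[Mat_n ⊕ Mat̄_n]_q`: `z a α` and `zs a α = (z a α)*`. -/
inductive PolGen (n : ℕ) : Type
  | z (a α : Fin n)
  | zs (a α : Fin n)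

/-- The free algebra on the generators. -/
abbrev FreePol (n : ℕ) := FreeAlgebra ℂ (PolGen n)

def gz {n : ℕ} (a α : Fin n) : FreePol n := FreeAlgebra.ι ℂ (PolGen.z a α)
def gzs {n : ℕ} (a α : Fin n) : FreePol n := FreeAlgebra.ι ℂ (PolGen.zs a α)

/-- The R-matrix entries. -/
def Rmat (q : ℝ) {n : ℕ} (j i j' i' : Fin n) : ℂ :=
  if i ≠ j ∧ j = j' ∧ i = i' then (q : ℂ)⁻¹
  else if i = j ∧ j = j' ∧ i = i' then 1
  else if i = j ∧ i' = j' ∧ i < i' then -((q : ℂ)⁻¹ ^ 2 - 1)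
  else 0

/-- The defining relations of `ℂ[Mat_n ⊕ Mat̄_n]_q`. -/
inductive PolRel (q : ℝ) (n : ℕ) : FreePol n → FreePol n → Prop
  | zz_q (a b α β : Fin n) : (a = b ∧ α < β) ∨ (a < b ∧ α = β) →
      PolRel q n (gz a α * gz b β) ((q : ℂ) • (gz b β * gz a α))
  | zz_comm (a b α β : Fin n) : α < β → b < a →
      PolRel q n (gz a α * gz b β) (gz b β * gz a α)
  | zz_mix (a b α β : Fin n) : α < β → a < b →
      PolRel q n (gz a α * gz b β)
        (gz b β * gz a α + ((q : ℂ) - (q : ℂ)⁻¹) • (gz a β * gz b α))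
  | zszs_q (a b α β : Fin n) : (a = b ∧ α < β) ∨ (a < b ∧ α = β) →
      PolRel q n (gzs b β * gzs a α) ((q : ℂ) • (gzs a α * gzs b β))
  | zszs_comm (a b α β : Fin n) : α < β → b < a →
      PolRel q n (gzs b β * gzs a α) (gzs a α * gzs b β)
  | zszs_mix (a b α β : Fin n) : α < β → a < b →
      PolRel q n (gzs b β * gzs a α)
        (gzs a α * gzs b β + ((q : ℂ) - (q : ℂ)⁻¹) • (gzs b α * gzs a β))
  | cross (a b α β : Fin n) :
      PolRel q n (gzs b β * gz a α)
        ((q : ℂ) ^ 2 • (∑ a' : Fin n, ∑ b' : Fin n, ∑ α' : Fin n, ∑ β' : Fin n,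
            (Rmat q b a b' a' * Rmat q β α β' α') • (gz a' α' * gzs b' β'))
          + ((1 - (q : ℂ) ^ 2) * (if a = b then 1 else 0) *
              (if α = β then 1 else 0)) • (1 : FreePol n))

/-- The algebra `Pol(Mat_n)_q = ℂ[Mat_n ⊕ Mat̄_n]_q`. -/
abbrev PolMat (q : ℝ) (n : ℕ) := RingQuot (PolRel q n)

/-- The generator `z_a^α`. -/
def Z (q : ℝ) (n : ℕ) (a α : Fin n) : PolMat q n :=
  RingQuot.mkAlgHom ℂ (PolRel q n) (gz a α)

/-- The generator `(z_a^α)*`. -/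
def Zs (q : ℝ) (n : ℕ) (a α : Fin n) : PolMat q n :=
  RingQuot.mkAlgHom ℂ (PolRel q n) (gzs a α)

/-- Number of inversions of a permutation of `Fin k`. -/
def invCount {k : ℕ} (s : Equiv.Perm (Fin k)) : ℕ :=
  (Finset.univ.filter (fun p : Fin k × Fin k => p.1 < p.2 ∧ s p.2 < s p.1)).card

/-- The quantum minor `z^{∧k}_{I,J}` for index maps `I J : Fin k → Fin n`
(used with strictly increasing `I`, `J`). -/
def zMinor (q : ℝ) (n : ℕ) {k : ℕ} (I J : Fin k → Fin n) : PolMat q n :=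
  ∑ s : Equiv.Perm (Fin k),
    ((-(q : ℂ)) ^ invCount s) • (List.ofFn fun m => Z q n (I m) (J (s m))).prod

/-- `(z^{∧k}_{I,J})*` : the star of the quantum minor, written out explicitly
(star reverses products and fixes the real coefficients `(-q)^{l(s)}`). -/
def zsMinor (q : ℝ) (n : ℕ) {k : ℕ} (I J : Fin k → Fin n) : PolMat q n :=
  ∑ s : Equiv.Perm (Fin k),
    ((-(q : ℂ)) ^ invCount s) • ((List.ofFn fun m => Zs q n (I m) (J (s m))).reverse).prod

/-- Increasing enumeration of a finite subset of `Fin n`. -/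
def enumF {n : ℕ} (S : Finset (Fin n)) : Fin S.card → Fin n :=
  fun m => ((S.orderIsoOfFin rfl) m).1

/-- Quantum minor with rows and columns given by finite sets. -/
def zMinorS (q : ℝ) (n : ℕ) (I J : Finset (Fin n)) : PolMat q n :=
  if h : J.card = I.card then
    zMinor q n (enumF I) (fun m => enumF J (Fin.cast h.symm m))
  else 0

/-- Star of the quantum minor with rows and columns given by finite sets. -/
def zsMinorS (q : ℝ) (n : ℕ) (I J : Finset (Fin n)) : PolMat q n :=
  if h : J.card = I.card then
    zsMinor q n (enumF I) (fun m => enumF J (Fin.cast h.symm m))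
  else 0

/-- The element `y_k = Σ_{J',J''} z^{∧k}_{J'',J'} (z^{∧k}_{J'',J'})*`. -/
def yElt (q : ℝ) (n : ℕ) (k : ℕ) : PolMat q n :=
  ∑ J' ∈ Finset.powersetCard k (Finset.univ : Finset (Fin n)),
    ∑ J'' ∈ Finset.powersetCard k (Finset.univ : Finset (Fin n)),
      zMinorS q n J'' J' * zsMinorS q n J'' J'

/-- The left ideal generated by the elements `(z_a^α)*`. -/
def lId (q : ℝ) (n : ℕ) : Submodule (PolMat q n) (PolMat q n) :=
  Submodule.span (PolMat q n) {x : PolMat q n | ∃ a α : Fin n, x = Zs q n a α}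

/-- The module `H = Pol(Mat_n)_q / (left ideal generated by the `(z_a^α)*`)`,
i.e. the module with one generator `v₀` and relations `(z_a^α)* v₀ = 0`. -/
abbrev HModF (q : ℝ) (n : ℕ) := PolMat q n ⧸ lId q n

/-- The cyclic vector `v₀ ∈ H`. -/
def v0 (q : ℝ) (n : ℕ) : HModF q n := Submodule.Quotient.mk 1

/-- The quantum determinant `det_q z`. -/
def detqZ (q : ℝ) (n : ℕ) : PolMat q n := zMinor q n (fun i => i) (fun i => i)

/-- The highest weight vector
`u_λ = (det_q z)^{λ_n} ∏_{j=1}^{n-1} (z^{∧j}_{{1..j},{1..j}})^{λ_j−λ_{j+1}} v₀`. -/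
def uLam (q : ℝ) (n : ℕ) (hn : 0 < n) (lam : Fin n → ℤ) : HModF q n :=
  ((detqZ q n ^ (lam ⟨n - 1, by omega⟩).toNat) *
    (List.ofFn (fun j : Fin (n - 1) =>
      (zMinor q n (Fin.castLE (by have := j.isLt; omega : (j : ℕ) + 1 ≤ n))
        (Fin.castLE (by have := j.isLt; omega : (j : ℕ) + 1 ≤ n))) ^
        ((lam ⟨(j : ℕ), by have := j.isLt; omega⟩ -
          lam ⟨(j : ℕ) + 1, by have := j.isLt; omega⟩).toNat))).prod) • v0 q n

/-- The `q`-factorial Schur polynomial `s_ν(x₁,…,x_n; p)`, evaluated at a point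
(`ν_j + n - j` factors in column `j`, in 1-indexed terms). -/
def qSchurVal (n : ℕ) (ν : Fin n → ℕ) (x : Fin n → ℂ) (p : ℂ) : ℂ :=
  (Matrix.det (Matrix.of fun i j : Fin n =>
      ∏ m ∈ Finset.range (ν j + (n - 1 - (j : ℕ))), (x i - p ^ m))) /
    ∏ pr ∈ Finset.univ.filter (fun pr : Fin n × Fin n => pr.1 < pr.2), (x pr.1 - x pr.2)

/-- The partition `1^k`. -/
def onePart (n k : ℕ) : Fin n → ℕ := fun j => if (j : ℕ) < k then 1 else 0

/-! Let `A` be the subalgebra generated by the `z_a^α` and `Y` the set of the `(z_a^α)*`.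
The cross relations rewrite `(z_b^β)* z_a^α` as a combination of `1` and the
`z_{a'}^{α'} (z_{b'}^{β'})*`, so by induction `y g ∈ A · span(1, Y)` for `y ∈ Y`, `g ∈ A`.
Consequently `A + Pol(Mat_n)_q · Y` is stable under left multiplication by all generators: it is a
left ideal containing `1`, hence everything. Since `Pol(Mat_n)_q · Y` annihilates `v₀`, every
vector of `H` is `f · v₀` with `f ∈ A`. -/

open Algebra Submodule

section NormalOrdering

variable (K : Type*) {R : Type*} [CommSemiring K] [Semiring R] [Algebra K R] (X Y : Set R)

def normalOrderedSpan : Submodule K R :=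
  Subalgebra.toSubmodule (adjoin K X) * span K (insert 1 Y)

variable {K X Y}

theorem adjoin_mem_normalOrderedSpan {a : R} (ha : a ∈ adjoin K X) :
    a ∈ normalOrderedSpan K X Y := by
  rw [← mul_one a]
  exact mul_mem_mul ha (subset_span (Set.mem_insert 1 Y))

theorem mem_normalOrderedSpan_of_mem {y : R} (hy : y ∈ Y) :
    y ∈ normalOrderedSpan K X Y := by
  rw [← one_mul y]
  exact mul_mem_mul (one_mem (adjoin K X)) (subset_span (Set.mem_insert_of_mem 1 hy))

theorem adjoin_mul_mem_normalOrderedSpan {a u : R} (ha : a ∈ adjoin K X)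
    (hu : u ∈ normalOrderedSpan K X Y) : a * u ∈ normalOrderedSpan K X Y := by
  have : Subalgebra.toSubmodule (adjoin K X) * normalOrderedSpan K X Y ≤
      normalOrderedSpan K X Y := by
    rw [normalOrderedSpan, ← mul_assoc, (adjoin K X).isIdempotentElem_toSubmodule.eq]
  exact this (mul_mem_mul ha hu)

theorem normalOrderedSpan_mul_mem {u g : R} (hu : u ∈ normalOrderedSpan K X Y)
    (hg : g ∈ adjoin K X) (hYg : ∀ y ∈ Y, y * g ∈ normalOrderedSpan K X Y) :
    u * g ∈ normalOrderedSpan K X Y := by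
  refine Submodule.mul_induction_on (C := fun u => u * g ∈ normalOrderedSpan K X Y) hu
    (fun a ha s hs => ?_) (fun u v hu hv => by simpa [add_mul] using add_mem hu hv)
  rw [mul_assoc]
  refine adjoin_mul_mem_normalOrderedSpan ha ?_
  induction hs using span_induction with
  | mem y hy =>
    rcases hy with rfl | hy
    · simpa using adjoin_mem_normalOrderedSpan hg
    · exact hYg y hy
  | zero => simp
  | add s t _ _ hs ht => simpa [add_mul] using add_mem hs ht
  | smul c s _ hs => simpa using Submodule.smul_mem _ c hs

theorem mul_adjoin_mem_normalOrderedSpan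
    (hXY : ∀ y ∈ Y, ∀ x ∈ X, y * x ∈ normalOrderedSpan K X Y)
    {g : R} (hg : g ∈ adjoin K X) : ∀ y ∈ Y, y * g ∈ normalOrderedSpan K X Y := by
  induction hg using adjoin_induction with
  | mem x hx => exact fun y hy => hXY y hy x hx
  | algebraMap r =>
    intro y hy
    rw [← commutes, ← Algebra.smul_def]
    exact Submodule.smul_mem _ r (mem_normalOrderedSpan_of_mem hy)
  | add g h _ _ ihg ihh =>
    exact fun y hy => by simpa [mul_add] using add_mem (ihg y hy) (ihh y hy)
  | mul g h _ hh ihg ihh =>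
    exact fun y hy => by simpa [mul_assoc] using normalOrderedSpan_mul_mem (ihg y hy) hh ihh

theorem normalOrderedSpan_le_sup_span :
    normalOrderedSpan K X Y ≤
      Subalgebra.toSubmodule (adjoin K X) ⊔ (span R Y).restrictScalars K := by
  rw [normalOrderedSpan, Submodule.mul_le]
  intro a ha s hs
  induction hs using span_induction with
  | mem y hy =>
    rcases hy with rfl | hy
    · simpa using Submodule.mem_sup_left ha
    · exact mem_sup_right (Submodule.smul_mem (span R Y) a (subset_span hy))
  | zero => simp
  | add s t _ _ hs ht => simpa [mul_add] using add_mem hs ht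
  | smul c s _ hs => simpa using Submodule.smul_mem _ c hs

theorem adjoin_sup_span_eq_top (hgen : adjoin K (X ∪ Y) = ⊤)
    (hXY : ∀ y ∈ Y, ∀ x ∈ X, y * x ∈ normalOrderedSpan K X Y) :
    Subalgebra.toSubmodule (adjoin K X) ⊔ (span R Y).restrictScalars K = ⊤ := by
  set W := Subalgebra.toSubmodule (adjoin K X) ⊔ (span R Y).restrictScalars K
  have hmul (r : R) : ∀ w ∈ W, r * w ∈ W := by
    have hr : r ∈ adjoin K (X ∪ Y) := hgen ▸ Algebra.mem_top
    induction hr using adjoin_induction with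
    | mem z hz =>
      intro w hw
      obtain ⟨a, ha, l, hl, rfl⟩ := mem_sup.1 hw
      rw [mul_add]
      refine add_mem ?_ (mem_sup_right (Submodule.smul_mem (span R Y) z hl))
      rcases hz with hx | hy
      · exact Submodule.mem_sup_left
          (show z * a ∈ adjoin K X from mul_mem (subset_adjoin hx) ha)
      · exact normalOrderedSpan_le_sup_span (mul_adjoin_mem_normalOrderedSpan hXY ha z hy)
    | algebraMap c =>
      intro w hw
      rw [← Algebra.smul_def]
      exact Submodule.smul_mem _ c hw
    | add r s _ _ ihr ihs =>
      exact fun w hw => by simpa [add_mul] using add_mem (ihr w hw) (ihs w hw)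
    | mul r s _ _ ihr ihs => exact fun w hw => by simpa [mul_assoc] using ihr _ (ihs w hw)
  exact eq_top_iff'.2 fun r => by
    simpa using hmul r 1 (Submodule.mem_sup_left (one_mem (adjoin K X)))

end NormalOrdering

theorem Zs_mul_Z (q : ℝ) (n : ℕ) (a b α β : Fin n) :
    Zs q n b β * Z q n a α =
      (q : ℂ) ^ 2 • (∑ a' : Fin n, ∑ b' : Fin n, ∑ α' : Fin n, ∑ β' : Fin n,
          (Rmat q b a b' a' * Rmat q β α β' α') • (Z q n a' α' * Zs q n b' β'))
      + ((1 - (q : ℂ) ^ 2) * (if a = b then 1 else 0) * (if α = β then 1 else 0)) • 1 := by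
  simpa [Z, Zs, apply_ite (RingQuot.mkAlgHom ℂ (PolRel q n))] using
    RingQuot.mkAlgHom_rel ℂ (PolRel.cross (q := q) (n := n) a b α β)

theorem Zs_mul_Z_mem_normalOrderedSpan (q : ℝ) (n : ℕ) :
    ∀ y ∈ {x | ∃ a α, x = Zs q n a α},
      ∀ x ∈ Set.range (fun p : Fin n × Fin n => Z q n p.1 p.2),
      y * x ∈ normalOrderedSpan ℂ (Set.range fun p : Fin n × Fin n => Z q n p.1 p.2)
        {x | ∃ a α, x = Zs q n a α} := by
  rintro _ ⟨b, β, rfl⟩ _ ⟨⟨a, α⟩, rfl⟩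
  rw [Zs_mul_Z]
  refine add_mem (Submodule.smul_mem _ _ (sum_mem fun a' _ => sum_mem fun b' _ =>
    sum_mem fun α' _ => sum_mem fun β' _ => Submodule.smul_mem _ _ ?_))
    (Submodule.smul_mem _ _ (adjoin_mem_normalOrderedSpan (one_mem _)))
  exact mul_mem_mul (subset_adjoin ⟨(a', α'), rfl⟩)
    (subset_span (Set.mem_insert_of_mem _ ⟨b', β', rfl⟩))

theorem adjoin_Z_union_Zs_eq_top (q : ℝ) (n : ℕ) :
    adjoin ℂ ((Set.range fun p : Fin n × Fin n => Z q n p.1 p.2) ∪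
      {x | ∃ a α, x = Zs q n a α}) = ⊤ := by
  have himage :
      (Set.range fun p : Fin n × Fin n => Z q n p.1 p.2) ∪ {x | ∃ a α, x = Zs q n a α} =
      RingQuot.mkAlgHom ℂ (PolRel q n) '' Set.range (FreeAlgebra.ι ℂ) := by
    ext x
    simp only [Set.mem_union, Set.mem_range, Set.mem_ofPred_eq, Set.mem_image,
      exists_exists_eq_and]
    constructor
    · rintro (⟨⟨a, α⟩, rfl⟩ | ⟨a, α, rfl⟩)
      exacts [⟨.z a α, rfl⟩, ⟨.zs a α, rfl⟩]
    · rintro ⟨(⟨a, α⟩ | ⟨a, α⟩), rfl⟩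
      exacts [Or.inl ⟨(a, α), rfl⟩, Or.inr ⟨a, α, rfl⟩]
  rw [himage, ← AlgHom.map_adjoin, FreeAlgebra.adjoin_range_ι, Algebra.map_top,
    AlgHom.range_eq_top]
  exact RingQuot.mkAlgHom_surjective ℂ (PolRel q n)

theorem H_generated_by_holomorphic_general (q : ℝ) (n : ℕ) :
    ∀ v : HModF q n, ∃ f : PolMat q n,
      f ∈ Algebra.adjoin ℂ (Set.range fun p : Fin n × Fin n => Z q n p.1 p.2) ∧
        f • v0 q n = v := by
  intro v
  obtain ⟨r, rfl⟩ := Submodule.Quotient.mk_surjective (lId q n) v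
  have hr := eq_top_iff'.1 (adjoin_sup_span_eq_top (adjoin_Z_union_Zs_eq_top q n)
    (Zs_mul_Z_mem_normalOrderedSpan q n)) r
  obtain ⟨f, hf, l, hl, rfl⟩ := mem_sup.1 hr
  refine ⟨f, hf, ?_⟩
  have hl0 : (Submodule.Quotient.mk l : HModF q n) = 0 := (Submodule.Quotient.mk_eq_zero _).2 hl
  rw [v0, ← Submodule.Quotient.mk_smul, smul_eq_mul, mul_one, Submodule.Quotient.mk_add, hl0,
    add_zero]

/-- Every element of `H` is of the form `f · v₀` with `f` in the unital
subalgebra of `Pol(Mat_n)_q` generated by the `z_a^α`. -/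
theorem H_generated_by_holomorphic (q : ℝ) (hq0 : 0 < q) (hq1 : q < 1) (n : ℕ) :
    ∀ v : HModF q n, ∃ f : PolMat q n,
      f ∈ Algebra.adjoin ℂ (Set.range fun p : Fin n × Fin n => Z q n p.1 p.2) ∧
        f • v0 q n = v :=
  H_generated_by_holomorphic_general q n

end
end

section
/- For n > 1, the assignment J_n: z_a^α ↦ q^{−1} z_a^α for 1 ≤ α ≤ n−1 and 1 ≤ a ≤ n−1, z_n^n ↦ 1, and z_a^α ↦ 0 for all other generators (together with the conjugate assignment on the starred generators), extends uniquely to a homomorphism of unital *-algebras J_n: Pol(Mat_n)_q → Pol(Mat_{n−1})_q. -/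
noncomputable section
open scoped BigOperators

/-!
`Pol(Mat_n)_q` is presented by generators and relations, so a homomorphism out of it is unique
once its values on the `z_a^α` and `(z_a^α)*` are fixed, and it exists as soon as the proposed
images satisfy the defining relations. Here the images of `z` and `z*` are the block matrices
`diag(q⁻¹ z, 1)` and `diag(q⁻¹ z*, 1)` of size `n = N + 1`.

The relations among the `z`'s (and among the `z*`'s) are homogeneous quadratic, so they survive the
factor `q⁻¹` on the `N × N` block; the off-diagonal blocks vanish, which settles the index patterns
involving the corner. In the cross relation the two `R`-matrices collapse the fourfold sum to a
diagonal term plus sums over `γ > α`, over `c > a`, and over both. For indices inside the block,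
every term acquires the factor `q⁻²` except the corner term `c = γ = N` of the double sum; it
contributes `q² (q⁻² - 1)²`, which is exactly what turns the constant `1 - q²` into `q⁻² (1 - q²)`.
-/

open Finset MulOpposite

section Contraction
variable (q : ℝ) {n : ℕ} {M : Type*} [AddCommGroup M] [Module ℂ M]

def rContract (a b : Fin n) (g : Fin n → Fin n → M) : M :=
  if a = b then g a a - ((q : ℂ)⁻¹ ^ 2 - 1) • ∑ c ∈ Ioi a, g c c else (q : ℂ)⁻¹ • g a b

lemma sum_Rmat_smul (a b : Fin n) (g : Fin n → Fin n → M) :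
    ∑ a', ∑ b', Rmat q b a b' a' • g a' b' = rContract q a b g := by
  by_cases hab : a = b
  · subst hab
    have hR : ∀ a' b', Rmat q a a b' a' = if b' = a' then
        (if a' = a then 1 else 0) + (if a < a' then -((q : ℂ)⁻¹ ^ 2 - 1) else 0) else 0 := by
      intro a' b'
      unfold Rmat
      split_ifs <;> grind
    simp [hR, rContract, add_smul, ite_smul, sum_add_distrib, sum_ite, filter_lt_eq_Ioi,
      smul_sum, sub_eq_add_neg]
  · have hR : ∀ a' b', Rmat q b a b' a' = if a' = a ∧ b' = b then (q : ℂ)⁻¹ else 0 := by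
      intro a' b'
      unfold Rmat
      split_ifs <;> grind
    simp [hR, rContract, hab, ite_and, ite_smul]

lemma sum_Rmat_mul_Rmat_smul (a b α β : Fin n) (f : Fin n → Fin n → Fin n → Fin n → M) :
    ∑ a', ∑ b', ∑ α', ∑ β', (Rmat q b a b' a' * Rmat q β α β' α') • f a' b' α' β' =
      rContract q a b fun a' b' => rContract q α β (f a' b') := by
  simp_rw [mul_smul, ← smul_sum, sum_Rmat_smul]

end Contraction

section Relations
variable {A : Type*} [Ring A] [Algebra ℂ A] (q : ℝ) {n : ℕ}

structure IsQuantumMatrix (X : Fin n → Fin n → A) : Prop where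
  mul_eq_smul_mul : ∀ a b α β : Fin n, (a = b ∧ α < β) ∨ (a < b ∧ α = β) →
    X a α * X b β = (q : ℂ) • (X b β * X a α)
  mul_comm : ∀ a b α β : Fin n, α < β → b < a → X a α * X b β = X b β * X a α
  mul_eq_mul_add : ∀ a b α β : Fin n, α < β → a < b →
    X a α * X b β = X b β * X a α + ((q : ℂ) - (q : ℂ)⁻¹) • (X a β * X b α)

def CrossRelation (X Y : Fin n → Fin n → A) : Prop :=
  ∀ a b α β : Fin n, Y b β * X a α =
    (q : ℂ) ^ 2 • (∑ a', ∑ b', ∑ α', ∑ β',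
        (Rmat q b a b' a' * Rmat q β α β' α') • (X a' α' * Y b' β')) +
      ((1 - (q : ℂ) ^ 2) * (if a = b then 1 else 0) * (if α = β then 1 else 0)) • 1

lemma crossRelation_iff (X Y : Fin n → Fin n → A) : CrossRelation q X Y ↔
    ∀ a b α β : Fin n, Y b β * X a α =
      (q : ℂ) ^ 2 • rContract q a b (fun a' b' => rContract q α β fun α' β' => X a' α' * Y b' β') +
        ((1 - (q : ℂ) ^ 2) * (if a = b then 1 else 0) * (if α = β then 1 else 0)) • 1 := by
  simp only [CrossRelation, sum_Rmat_mul_Rmat_smul]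

end Relations

section Generators
variable (q : ℝ) (n : ℕ)

lemma isQuantumMatrix_Z : IsQuantumMatrix q (Z q n) where
  mul_eq_smul_mul a b α β h := by
    simpa only [Z, map_mul, map_smul] using
      RingQuot.mkAlgHom_rel ℂ (PolRel.zz_q (q := q) a b α β h)
  mul_comm a b α β h₁ h₂ := by
    simpa only [Z, map_mul] using
      RingQuot.mkAlgHom_rel ℂ (PolRel.zz_comm (q := q) a b α β h₁ h₂)
  mul_eq_mul_add a b α β h₁ h₂ := by
    simpa only [Z, map_mul, map_add, map_smul] using
      RingQuot.mkAlgHom_rel ℂ (PolRel.zz_mix (q := q) a b α β h₁ h₂)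

/-- The relations among the `(z_a^α)*` are those among the `z_a^α`, read in the opposite
algebra. -/
lemma isQuantumMatrix_op_Zs : IsQuantumMatrix q fun a α => op (Zs q n a α) where
  mul_eq_smul_mul a b α β h := by
    simpa only [← op_mul, ← op_smul, op_inj, Zs, map_mul, map_smul] using
      RingQuot.mkAlgHom_rel ℂ (PolRel.zszs_q (q := q) a b α β h)
  mul_comm a b α β h₁ h₂ := by
    simpa only [← op_mul, op_inj, Zs, map_mul] using
      RingQuot.mkAlgHom_rel ℂ (PolRel.zszs_comm (q := q) a b α β h₁ h₂)
  mul_eq_mul_add a b α β h₁ h₂ := by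
    simpa only [← op_mul, ← op_smul, ← op_add, op_inj, Zs, map_mul, map_add, map_smul] using
      RingQuot.mkAlgHom_rel ℂ (PolRel.zszs_mix (q := q) a b α β h₁ h₂)

lemma crossRelation_Z_Zs : CrossRelation q (Z q n) (Zs q n) := fun a b α β => by
  simpa only [Z, Zs, map_mul, map_add, map_smul, map_sum, map_one] using
    RingQuot.mkAlgHom_rel ℂ (PolRel.cross (q := q) a b α β)

end Generators

namespace PolMat
variable {A : Type*} [Ring A] [Algebra ℂ A] {q : ℝ} {n : ℕ}

def genValue (X Y : Fin n → Fin n → A) : PolGen n → A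
  | .z a α => X a α
  | .zs a α => Y a α

def lift (X Y : Fin n → Fin n → A) (hX : IsQuantumMatrix q X)
    (hY : IsQuantumMatrix q fun a α => op (Y a α)) (hXY : CrossRelation q X Y) :
    PolMat q n →ₐ[ℂ] A :=
  RingQuot.liftAlgHom ℂ ⟨FreeAlgebra.lift ℂ (genValue X Y), fun x y h => by
    induction h <;>
      simp only [gz, gzs, map_mul, map_add, map_smul, map_sum, map_one,
        FreeAlgebra.lift_ι_apply, genValue]
    case zz_q h => exact hX.mul_eq_smul_mul _ _ _ _ h
    case zz_comm h₁ h₂ => exact hX.mul_comm _ _ _ _ h₁ h₂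
    case zz_mix h₁ h₂ => exact hX.mul_eq_mul_add _ _ _ _ h₁ h₂
    case zszs_q h =>
      apply op_injective
      simpa only [op_mul, op_smul] using hY.mul_eq_smul_mul _ _ _ _ h
    case zszs_comm h₁ h₂ =>
      apply op_injective
      simpa only [op_mul] using hY.mul_comm _ _ _ _ h₁ h₂
    case zszs_mix h₁ h₂ =>
      apply op_injective
      simpa only [op_mul, op_add, op_smul] using hY.mul_eq_mul_add _ _ _ _ h₁ h₂
    case cross => exact hXY _ _ _ _⟩

section
variable {X Y : Fin n → Fin n → A} (hX : IsQuantumMatrix q X)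
    (hY : IsQuantumMatrix q fun a α => op (Y a α)) (hXY : CrossRelation q X Y)

@[simp] lemma lift_Z (a α : Fin n) : lift X Y hX hY hXY (Z q n a α) = X a α := by
  simp [lift, Z, gz, genValue]

@[simp] lemma lift_Zs (a α : Fin n) : lift X Y hX hY hXY (Zs q n a α) = Y a α := by
  simp [lift, Zs, gzs, genValue]

end

lemma algHom_ext {φ ψ : PolMat q n →ₐ[ℂ] A} (hz : ∀ a α, φ (Z q n a α) = ψ (Z q n a α))
    (hzs : ∀ a α, φ (Zs q n a α) = ψ (Zs q n a α)) : φ = ψ :=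
  RingQuot.ringQuot_ext' ℂ φ ψ <| FreeAlgebra.hom_ext <| funext fun
    | .z a α => hz a α
    | .zs a α => hzs a α

lemma existsUnique_algHom {X Y : Fin n → Fin n → A} (hX : IsQuantumMatrix q X)
    (hY : IsQuantumMatrix q fun a α => op (Y a α)) (hXY : CrossRelation q X Y) :
    ∃! φ : PolMat q n →ₐ[ℂ] A,
      (∀ a α, φ (Z q n a α) = X a α) ∧ (∀ a α, φ (Zs q n a α) = Y a α) :=
  ⟨lift X Y hX hY hXY, ⟨lift_Z hX hY hXY, lift_Zs hX hY hXY⟩, fun _ ⟨hz, hzs⟩ =>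
    algHom_ext (fun a α => (hz a α).trans (lift_Z hX hY hXY a α).symm)
      (fun a α => (hzs a α).trans (lift_Zs hX hY hXY a α).symm)⟩

end PolMat

section
variable {N : ℕ} {M : Type*} [AddCommMonoid M]

lemma Fin.not_last_lt (a : Fin (N + 1)) : ¬ Fin.last N < a := (Fin.le_last a).not_gt

lemma Fin.sum_Ioi_castSucc (f : Fin (N + 1) → M) (k : Fin N) :
    ∑ x ∈ Ioi k.castSucc, f x = ∑ x ∈ Ioi k, f x.castSucc + f (.last N) := by
  simp only [← filter_lt_eq_Ioi, sum_filter, Fin.sum_univ_castSucc, Fin.castSucc_lt_castSucc_iff,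
    Fin.castSucc_lt_last, if_true]

lemma Fin.sum_Ioi_last (f : Fin (N + 1) → M) : ∑ x ∈ Ioi (.last N), f x = 0 := by
  simp [← filter_lt_eq_Ioi, Fin.not_last_lt]

end

section Extension
variable {A : Type*} [Ring A] [Algebra ℂ A] (q : ℝ) {N : ℕ}

def extendLast (X : Fin N → Fin N → A) (a α : Fin (N + 1)) : A :=
  if h : (a : ℕ) < N ∧ (α : ℕ) < N then ((q : ℂ)⁻¹) • X ⟨a, h.1⟩ ⟨α, h.2⟩
  else if (a : ℕ) = N ∧ (α : ℕ) = N then 1 else 0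

variable (X : Fin N → Fin N → A)

@[simp] lemma extendLast_castSucc_castSucc (a α : Fin N) :
    extendLast q X a.castSucc α.castSucc = (q : ℂ)⁻¹ • X a α := by
  simp [extendLast]

@[simp] lemma extendLast_castSucc_last (a : Fin N) : extendLast q X a.castSucc (.last N) = 0 := by
  simp [extendLast, a.isLt.ne]

@[simp] lemma extendLast_last_castSucc (α : Fin N) : extendLast q X (.last N) α.castSucc = 0 := by
  simp [extendLast, α.isLt.ne]

@[simp] lemma extendLast_last_last : extendLast q X (.last N) (.last N) = 1 := by
  simp [extendLast]

lemma extendLast_op : extendLast q (fun a α => op (X a α)) = fun a α => op (extendLast q X a α) := by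
  funext a α
  unfold extendLast
  split_ifs <;> simp

variable {q X}

lemma IsQuantumMatrix.extendLast (h : IsQuantumMatrix q X) :
    IsQuantumMatrix q (extendLast q X) where
  mul_eq_smul_mul a b α β hab := by
    cases a using Fin.lastCases <;> cases b using Fin.lastCases <;>
      cases α using Fin.lastCases <;> cases β using Fin.lastCases <;>
      simp [Fin.not_last_lt] at hab ⊢
    rw [h.mul_eq_smul_mul _ _ _ _ hab]
    module
  mul_comm a b α β hαβ hba := by
    cases a using Fin.lastCases <;> cases b using Fin.lastCases <;>
      cases α using Fin.lastCases <;> cases β using Fin.lastCases <;>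
      simp [Fin.not_last_lt] at hαβ hba ⊢
    rw [h.mul_comm _ _ _ _ hαβ hba]
  mul_eq_mul_add a b α β hαβ hab := by
    cases a using Fin.lastCases <;> cases b using Fin.lastCases <;>
      cases α using Fin.lastCases <;> cases β using Fin.lastCases <;>
      simp [Fin.not_last_lt] at hαβ hab ⊢
    rw [h.mul_eq_mul_add _ _ _ _ hαβ hab]
    module

lemma CrossRelation.extendLast (hq : q ≠ 0) {Y : Fin N → Fin N → A} (h : CrossRelation q X Y) :
    CrossRelation q (extendLast q X) (extendLast q Y) := by
  have hq : (q : ℂ) ≠ 0 := Complex.ofReal_ne_zero.mpr hq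
  rw [crossRelation_iff] at h ⊢
  intro a b α β
  -- when all four indices lie in the block, `h` rewrites the left-hand side
  cases a using Fin.lastCases <;> cases b using Fin.lastCases <;>
    cases α using Fin.lastCases <;> cases β using Fin.lastCases <;>
    (try simp only [extendLast_castSucc_castSucc, smul_mul_smul_comm, h]) <;>
    simp [rContract, Fin.sum_Ioi_castSucc, Fin.sum_Ioi_last, @eq_comm _ (Fin.last N), ← smul_sum]
  all_goals
    try split_ifs
    all_goals subst_vars; match_scalars <;> field_simp <;> ring

end Extension

theorem exists_unique_Jn_general (q : ℝ) (hq0 : 0 < q) (n : ℕ) (hn : 1 < n) :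
    ∃! φ : PolMat q n →ₐ[ℂ] PolMat q (n - 1),
      (∀ a α : Fin n,
        φ (Z q n a α) =
          if h : (a : ℕ) < n - 1 ∧ (α : ℕ) < n - 1 then
            ((q : ℂ)⁻¹) • Z q (n - 1) ⟨a, h.1⟩ ⟨α, h.2⟩
          else if (a : ℕ) = n - 1 ∧ (α : ℕ) = n - 1 then 1 else 0) ∧
      (∀ a α : Fin n,
        φ (Zs q n a α) =
          if h : (a : ℕ) < n - 1 ∧ (α : ℕ) < n - 1 then
            ((q : ℂ)⁻¹) • Zs q (n - 1) ⟨a, h.1⟩ ⟨α, h.2⟩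
          else if (a : ℕ) = n - 1 ∧ (α : ℕ) = n - 1 then 1 else 0) := by
  obtain ⟨N, rfl⟩ : ∃ N, n = N + 1 := ⟨n - 1, by omega⟩
  refine PolMat.existsUnique_algHom (X := extendLast q (Z q N)) (Y := extendLast q (Zs q N))
    (isQuantumMatrix_Z q N).extendLast ?_ ((crossRelation_Z_Zs q N).extendLast hq0.ne')
  rw [← extendLast_op]
  exact (isQuantumMatrix_op_Zs q N).extendLast

/-- For `n > 1`, the assignment
`z_a^α ↦ q^{−1} z_a^α` (for `a, α ≤ n−1`), `z_n^n ↦ 1`, other generators `↦ 0`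
(with the conjugate assignment on starred generators) extends uniquely to a unital
`*`-algebra homomorphism `J_n : Pol(Mat_n)_q → Pol(Mat_{n−1})_q`.  (A `*`-algebra
homomorphism is a unital algebra homomorphism commuting with the involutions;
since the involutions interchange the generators `z_a^α` and `(z_a^α)*`, this is
expressed by prescribing the values on both families of generators.) -/
theorem exists_unique_Jn (q : ℝ) (hq0 : 0 < q) (hq1 : q < 1) (n : ℕ) (hn : 1 < n) :
    ∃! φ : PolMat q n →ₐ[ℂ] PolMat q (n - 1),
      (∀ a α : Fin n,
        φ (Z q n a α) =
          if h : (a : ℕ) < n - 1 ∧ (α : ℕ) < n - 1 then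
            ((q : ℂ)⁻¹) • Z q (n - 1) ⟨a, h.1⟩ ⟨α, h.2⟩
          else if (a : ℕ) = n - 1 ∧ (α : ℕ) = n - 1 then 1 else 0) ∧
      (∀ a α : Fin n,
        φ (Zs q n a α) =
          if h : (a : ℕ) < n - 1 ∧ (α : ℕ) < n - 1 then
            ((q : ℂ)⁻¹) • Zs q (n - 1) ⟨a, h.1⟩ ⟨α, h.2⟩
          else if (a : ℕ) = n - 1 ∧ (α : ℕ) = n - 1 then 1 else 0) :=
  exists_unique_Jn_general q hq0 n hn

end
end
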